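/- arXiv:2006.05785 — 2 statements merged into one kernel-verified Lean document; each statement's English description precedes it below -/
import Mathlib

section
/- Let $1 \le \mu, \theta, \lambda, \kappa < \infty$ satisfy $\frac{1}{\theta}+\frac{1}{\lambda}+\frac{1}{\kappa} > 1$ and $1 + \frac{3}{\mu} = \frac{1}{\theta}+\frac{1}{\lambda}+\frac{1}{\kappa}$. If $\varphi : \mathbb{R}^3 \to \mathbb{R}$ is smooth with compact support, then there exists $C = C(\theta,\lambda,\kappa)$ such that $\|\varphi\|_{L^\mu(\mathbb{R}^3)} \le C\, \|\partial_1 \varphi\|_{L^\theta}^{1/3}\, \|\partial_2 \varphi\|_{L^\lambda}^{1/3}\, \|\partial_3 \varphi\|_{L^\kappa}^{1/3}$. -/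
open MeasureTheory ENNReal NNReal

open Function Set

noncomputable def pd (i : Fin 3) (f : EuclideanSpace ℝ (Fin 3) → ℝ)
    (x : EuclideanSpace ℝ (Fin 3)) : ℝ :=
  fderiv ℝ f x (EuclideanSpace.single i 1)

local notation "μ3" => (fun _ : Fin 3 => (volume : Measure ℝ))

/-- Loomis–Whitney for three functions on ℝ³. -/
lemma loomis_whitney {f : Fin 3 → ((Fin 3 → ℝ) → ℝ≥0∞)} (hf : ∀ i, Measurable (f i)) :
    ∫⁻ x : Fin 3 → ℝ, ∏ i, (∫⁻ t, f i (update x i t)) ^ ((1:ℝ)/2) ≤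
    ∏ i, (∫⁻ x : Fin 3 → ℝ, f i x) ^ ((1:ℝ)/2) := by
  classical
  -- abbreviations
  set A : Fin 3 → ((Fin 3 → ℝ) → ℝ≥0∞) := fun i => ∫⋯∫⁻_{i}, f i ∂μ3 with hA
  have hAm : ∀ i, Measurable (A i) := fun i => (hf i).lmarginal μ3
  have hAinv : ∀ i x t, A i (update x i t) = A i x := fun i x t =>
    lmarginal_update_of_mem μ3 (Finset.mem_singleton_self i) _ _ _
  set B1 : (Fin 3 → ℝ) → ℝ≥0∞ := ∫⋯∫⁻_{0,1}, f 1 ∂μ3 with hB1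
  set B2 : (Fin 3 → ℝ) → ℝ≥0∞ := ∫⋯∫⁻_{0,2}, f 2 ∂μ3 with hB2
  set C0 : (Fin 3 → ℝ) → ℝ≥0∞ := ∫⋯∫⁻_{0,1}, f 0 ∂μ3 with hC0
  have hB1m : Measurable B1 := (hf 1).lmarginal μ3
  have hB2m : Measurable B2 := (hf 2).lmarginal μ3
  have hC0m : Measurable C0 := (hf 0).lmarginal μ3
  set K : Fin 3 → ℝ≥0∞ := fun i => ∫⁻ x : Fin 3 → ℝ, f i x ∂(Measure.pi μ3) with hK
  -- the three integrands
  set Φ : (Fin 3 → ℝ) → ℝ≥0∞ := fun x => (A 0 x) ^ ((1:ℝ)/2) *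
      ((A 1 x) ^ ((1:ℝ)/2) * (A 2 x) ^ ((1:ℝ)/2)) with hΦ
  set Φ1 : (Fin 3 → ℝ) → ℝ≥0∞ := fun x => (B1 x) ^ ((1:ℝ)/2) *
      ((A 0 x) ^ ((1:ℝ)/2) * (B2 x) ^ ((1:ℝ)/2)) with hΦ1
  set Φ2 : (Fin 3 → ℝ) → ℝ≥0∞ := fun x => (K 2) ^ ((1:ℝ)/2) *
      ((B1 x) ^ ((1:ℝ)/2) * (C0 x) ^ ((1:ℝ)/2)) with hΦ2
  have hΦm : Measurable Φ := by fun_prop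
  have hΦ1m : Measurable Φ1 := by fun_prop
  have hΦ2m : Measurable Φ2 := by fun_prop
  -- Cauchy–Schwarz step
  have CS : ∀ (g h : ℝ → ℝ≥0∞), Measurable g → Measurable h →
      ∫⁻ t, (g t) ^ ((1:ℝ)/2) * (h t) ^ ((1:ℝ)/2) ≤
      (∫⁻ t, g t) ^ ((1:ℝ)/2) * (∫⁻ t, h t) ^ ((1:ℝ)/2) := fun g h hg hh =>
    lintegral_mul_norm_pow_le hg.aemeasurable hh.aemeasurable (by norm_num) (by norm_num)
      (by norm_num)
  -- Step 1 : integrate over coordinate 0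
  have step1 : ∀ x, ∫⁻ t, Φ (update x 0 t) ≤ Φ1 x := by
    intro x
    have : ∀ t, Φ (update x 0 t) = (A 0 x) ^ ((1:ℝ)/2) *
        ((A 1 (update x 0 t)) ^ ((1:ℝ)/2) * (A 2 (update x 0 t)) ^ ((1:ℝ)/2)) := by
      intro t; rw [hΦ]; simp only [hAinv 0 x t]
    rw [lintegral_congr this, lintegral_const_mul _ (by fun_prop)]
    have h1 : ∫⁻ t, A 1 (update x 0 t) = B1 x := by
      rw [hB1]
      have : ({0,1} : Finset (Fin 3)) = {0} ∪ {1} := by decide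
      rw [this, lmarginal_union μ3 (f 1) (hf 1) (by decide), lmarginal_singleton]
    have h2 : ∫⁻ t, A 2 (update x 0 t) = B2 x := by
      rw [hB2]
      have : ({0,2} : Finset (Fin 3)) = {0} ∪ {2} := by decide
      rw [this, lmarginal_union μ3 (f 2) (hf 2) (by decide), lmarginal_singleton]
    calc (A 0 x) ^ ((1:ℝ)/2) *
        ∫⁻ t, (A 1 (update x 0 t)) ^ ((1:ℝ)/2) * (A 2 (update x 0 t)) ^ ((1:ℝ)/2)
        ≤ (A 0 x) ^ ((1:ℝ)/2) *
          ((∫⁻ t, A 1 (update x 0 t)) ^ ((1:ℝ)/2) * (∫⁻ t, A 2 (update x 0 t)) ^ ((1:ℝ)/2)) := by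
          gcongr
          exact CS _ _ (by fun_prop) (by fun_prop)
      _ = Φ1 x := by rw [h1, h2, hΦ1]; ring
  -- Step 2 : integrate over coordinate 1
  have step2 : ∀ x, ∫⁻ t, Φ1 (update x 1 t) ≤ Φ2 x := by
    intro x
    have hB1inv : ∀ t, B1 (update x 1 t) = B1 x := fun t =>
      lmarginal_update_of_mem μ3 (by decide) _ _ _
    have : ∀ t, Φ1 (update x 1 t) = (B1 x) ^ ((1:ℝ)/2) *
        ((A 0 (update x 1 t)) ^ ((1:ℝ)/2) * (B2 (update x 1 t)) ^ ((1:ℝ)/2)) := by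
      intro t; rw [hΦ1]; simp only [hB1inv t]
    rw [lintegral_congr this, lintegral_const_mul _ (by fun_prop)]
    have h1 : ∫⁻ t, A 0 (update x 1 t) = C0 x := by
      rw [hC0]
      have : ({0,1} : Finset (Fin 3)) = {1} ∪ {0} := by decide
      rw [this, lmarginal_union μ3 (f 0) (hf 0) (by decide), lmarginal_singleton]
    have h2 : ∫⁻ t, B2 (update x 1 t) = K 2 := by
      have : (Finset.univ : Finset (Fin 3)) = {1} ∪ {0,2} := by decide
      have h := lmarginal_union μ3 (f 2) (hf 2) (s := {1}) (t := {0,2}) (by decide)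
      show _ = ∫⁻ y : Fin 3 → ℝ, f 2 y ∂(Measure.pi μ3)
      rw [lintegral_eq_lmarginal_univ (f := f 2) x, this, h, lmarginal_singleton]
    calc (B1 x) ^ ((1:ℝ)/2) *
        ∫⁻ t, (A 0 (update x 1 t)) ^ ((1:ℝ)/2) * (B2 (update x 1 t)) ^ ((1:ℝ)/2)
        ≤ (B1 x) ^ ((1:ℝ)/2) *
          ((∫⁻ t, A 0 (update x 1 t)) ^ ((1:ℝ)/2) * (∫⁻ t, B2 (update x 1 t)) ^ ((1:ℝ)/2)) := by
          gcongr
          exact CS _ _ (by fun_prop) (by fun_prop)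
      _ = Φ2 x := by rw [h1, h2, hΦ2]; ring
  -- Step 3 : integrate over coordinate 2
  have step3 : ∀ x, ∫⁻ t, Φ2 (update x 2 t) ≤
      (K 2) ^ ((1:ℝ)/2) * ((K 1) ^ ((1:ℝ)/2) * (K 0) ^ ((1:ℝ)/2)) := by
    intro x
    rw [hΦ2]
    simp only []
    rw [lintegral_const_mul _ (by fun_prop)]
    have h1 : ∫⁻ t, B1 (update x 2 t) = K 1 := by
      have huniv : (Finset.univ : Finset (Fin 3)) = {2} ∪ {0,1} := by decide
      have h := lmarginal_union μ3 (f 1) (hf 1) (s := {2}) (t := {0,1}) (by decide)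
      show _ = ∫⁻ y : Fin 3 → ℝ, f 1 y ∂(Measure.pi μ3)
      rw [lintegral_eq_lmarginal_univ (f := f 1) x, huniv, h, lmarginal_singleton]
    have h2 : ∫⁻ t, C0 (update x 2 t) = K 0 := by
      have huniv : (Finset.univ : Finset (Fin 3)) = {2} ∪ {0,1} := by decide
      have h := lmarginal_union μ3 (f 0) (hf 0) (s := {2}) (t := {0,1}) (by decide)
      show _ = ∫⁻ y : Fin 3 → ℝ, f 0 y ∂(Measure.pi μ3)
      rw [lintegral_eq_lmarginal_univ (f := f 0) x, huniv, h, lmarginal_singleton]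
    calc (K 2) ^ ((1:ℝ)/2) *
        ∫⁻ t, (B1 (update x 2 t)) ^ ((1:ℝ)/2) * (C0 (update x 2 t)) ^ ((1:ℝ)/2)
        ≤ (K 2) ^ ((1:ℝ)/2) *
          ((∫⁻ t, B1 (update x 2 t)) ^ ((1:ℝ)/2) * (∫⁻ t, C0 (update x 2 t)) ^ ((1:ℝ)/2)) := by
          gcongr
          exact CS _ _ (by fun_prop) (by fun_prop)
      _ = _ := by rw [h1, h2]
  -- Assemble
  have hvol : (volume : Measure (Fin 3 → ℝ)) = Measure.pi μ3 := volume_pi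
  have hint : ∀ x : Fin 3 → ℝ,
      ∏ i, (∫⁻ t, f i (update x i t)) ^ ((1:ℝ)/2) = Φ x := by
    intro x
    rw [Fin.prod_univ_three, hΦ]
    simp only [hA, lmarginal_singleton]
    ring
  have hgoalR : ∀ i : Fin 3, (∫⁻ x : Fin 3 → ℝ, f i x) = K i := by
    intro i; rw [hK, hvol]
  calc ∫⁻ x : Fin 3 → ℝ, ∏ i, (∫⁻ t, f i (update x i t)) ^ ((1:ℝ)/2)
      = ∫⁻ x, Φ x ∂(Measure.pi μ3) := by rw [← hvol]; exact lintegral_congr hint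
    _ = (∫⋯∫⁻_Finset.univ, Φ ∂μ3) 0 := lintegral_eq_lmarginal_univ 0
    _ = (∫⋯∫⁻_{1,2}, (fun x => ∫⁻ t, Φ (update x 0 t)) ∂μ3) 0 := by
        have huniv : (Finset.univ : Finset (Fin 3)) = insert 0 {1,2} := by decide
        rw [huniv, lmarginal_insert' Φ hΦm (by decide)]
    _ ≤ (∫⋯∫⁻_{1,2}, Φ1 ∂μ3) 0 := lmarginal_mono (fun x => step1 x) 0
    _ = (∫⋯∫⁻_{2}, (fun x => ∫⁻ t, Φ1 (update x 1 t)) ∂μ3) 0 := by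
        have h12 : ({1,2} : Finset (Fin 3)) = insert 1 {2} := by decide
        rw [h12, lmarginal_insert' Φ1 hΦ1m (by decide)]
    _ ≤ (∫⋯∫⁻_{2}, Φ2 ∂μ3) 0 := lmarginal_mono (fun x => step2 x) 0
    _ = ∫⁻ t, Φ2 (update 0 2 t) := lmarginal_singleton Φ2 2 ▸ rfl
    _ ≤ (K 2) ^ ((1:ℝ)/2) * ((K 1) ^ ((1:ℝ)/2) * (K 0) ^ ((1:ℝ)/2)) := step3 0
    _ = ∏ i, (∫⁻ x : Fin 3 → ℝ, f i x) ^ ((1:ℝ)/2) := by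
        rw [Fin.prod_univ_three, hgoalR 0, hgoalR 1, hgoalR 2]
        ring

noncomputable def Dpi (i : Fin 3) (u : (Fin 3 → ℝ) → ℝ) (x : Fin 3 → ℝ) : ℝ :=
  fderiv ℝ u x (Pi.single i 1)

-- scalar bound for the outer derivative
lemma abs_deriv_bound (s z w : ℝ) (hs : 1 < s) :
    |s * ‖z‖ ^ (s - 2) * (z * w)| ≤ s * |z| ^ (s - 1) * |w| := by
  rcases eq_or_ne z 0 with rfl | hz
  · simp [Real.zero_rpow (by intro h; · linarith [h] : s - 1 ≠ 0)]
  · have hz' : 0 < |z| := abs_pos.mpr hz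
    have h1 : |z| ^ (s - 2) * |z| = |z| ^ (s - 1) := by
      rw [← Real.rpow_add_one hz'.ne' (s-2)]; congr 1; ring
    have hzn : |‖z‖ ^ (s-2)| = |z| ^ (s-2) := by
      rw [Real.norm_eq_abs, abs_of_nonneg (Real.rpow_nonneg (abs_nonneg z) _)]
    rw [abs_mul, abs_mul, abs_mul, hzn, abs_of_pos (by linarith : (0:ℝ) < s)]
    calc s * |z| ^ (s-2) * (|z| * |w|) = (s * (|z| ^ (s-2) * |z|)) * |w| := by ring
      _ = s * |z| ^ (s-1) * |w| := by rw [h1]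
      _ ≤ s * |z| ^ (s-1) * |w| := le_rfl
-- directional derivative bound for ‖u‖^s
lemma fderiv_norm_rpow_single_le {u : (Fin 3 → ℝ) → ℝ} (hu : ContDiff ℝ 1 u)
    {s : ℝ} (hs : 1 < s) (y : Fin 3 → ℝ) (ξ : Fin 3 → ℝ) :
    |fderiv ℝ (fun y => ‖u y‖ ^ s) y ξ| ≤ s * |u y| ^ (s - 1) * |fderiv ℝ u y ξ| := by
  rw [Differentiable.fderiv_norm_rpow (hu.differentiable one_ne_zero) hs]
  simp only [ContinuousLinearMap.smul_apply, ContinuousLinearMap.coe_comp', Function.comp_apply,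
    innerSL_apply_apply, smul_eq_mul]
  have : inner (𝕜 := ℝ) (u y) (fderiv ℝ u y ξ) = u y * fderiv ℝ u y ξ := by
    simp [real_inner_comm, mul_comm]
  rw [this]
  simpa [Real.norm_eq_abs] using abs_deriv_bound s (u y) (fderiv ℝ u y ξ) hs

lemma ftc_pointwise {u : (Fin 3 → ℝ) → ℝ} (hu : ContDiff ℝ 1 u) (h2u : HasCompactSupport u)
    {s : ℝ} (hs : 1 ≤ s) (i : Fin 3) (x : Fin 3 → ℝ) :
    (‖u x‖₊ : ℝ≥0∞) ^ s ≤ ENNReal.ofReal s *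
      ∫⁻ t, (‖u (update x i t)‖₊ : ℝ≥0∞) ^ (s - 1) * (‖Dpi i u (update x i t)‖₊ : ℝ≥0∞) := by
  rcases eq_or_lt_of_le hs with hs1 | hs1
  · -- s = 1
    subst hs1
    simp only [ENNReal.rpow_one, sub_self, ENNReal.rpow_zero, one_mul, ENNReal.ofReal_one]
    have h1 : ContDiff ℝ 1 (u ∘ update x i) := hu.comp (contDiff_update 1 x i)
    have h2 : HasCompactSupport (u ∘ update x i) :=
      h2u.comp_isClosedEmbedding (isClosedEmbedding_update x i)
    have hderiv : ∀ t, deriv (u ∘ update x i) t = Dpi i u (update x i t) := by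
      intro t
      rw [fderiv_comp_deriv _ ((hu.differentiable one_ne_zero) _)
        (hasDerivAt_update x i t).differentiableAt, (hasDerivAt_update x i t).deriv]
      rfl
    calc (‖u x‖₊ : ℝ≥0∞)
        ≤ ∫⁻ t in Iic (x i), ‖deriv (u ∘ update x i) t‖₊ :=
          le_trans (by simp) (h2.enorm_le_lintegral_Ici_deriv h1 (x i))
      _ ≤ ∫⁻ t, ‖deriv (u ∘ update x i) t‖₊ := lintegral_mono' Measure.restrict_le_self le_rfl
      _ = ∫⁻ t, (‖Dpi i u (update x i t)‖₊ : ℝ≥0∞) := by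
          apply lintegral_congr; intro t; rw [hderiv t]
  · -- 1 < s
    set v : (Fin 3 → ℝ) → ℝ := fun y => ‖u y‖ ^ s with hv
    have hv1 : ContDiff ℝ 1 v := hu.norm_rpow hs1
    have hv2 : HasCompactSupport v := h2u.norm.rpow_const (by positivity)
    have h1 : ContDiff ℝ 1 (v ∘ update x i) := hv1.comp (contDiff_update 1 x i)
    have h2 : HasCompactSupport (v ∘ update x i) :=
      hv2.comp_isClosedEmbedding (isClosedEmbedding_update x i)
    have hderiv : ∀ t, deriv (v ∘ update x i) t = fderiv ℝ v (update x i t) (Pi.single i 1) := by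
      intro t
      rw [fderiv_comp_deriv _ ((hv1.differentiable one_ne_zero) _)
        (hasDerivAt_update x i t).differentiableAt, (hasDerivAt_update x i t).deriv]
    have hL : (‖u x‖₊ : ℝ≥0∞) ^ s = (‖v x‖₊ : ℝ≥0∞) := by
      rw [hv]
      simp only []
      rw [← ENNReal.coe_rpow_of_nonneg _ (by positivity : (0:ℝ) ≤ s)]
      congr 1
      rw [Real.nnnorm_rpow_of_nonneg (norm_nonneg _), nnnorm_norm]
    have hD : ∀ t, (‖deriv (v ∘ update x i) t‖₊ : ℝ≥0∞) ≤ ENNReal.ofReal s *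
        ((‖u (update x i t)‖₊ : ℝ≥0∞) ^ (s - 1) * (‖Dpi i u (update x i t)‖₊ : ℝ≥0∞)) := by
      intro t
      rw [hderiv t, ← enorm_eq_nnnorm, Real.enorm_eq_ofReal_abs]
      refine le_trans (ENNReal.ofReal_le_ofReal
        (fderiv_norm_rpow_single_le hu hs1 (update x i t) (Pi.single i 1))) ?_
      rw [ENNReal.ofReal_mul (by positivity), ENNReal.ofReal_mul (by positivity)]
      rw [← ENNReal.ofReal_rpow_of_nonneg (abs_nonneg _) (by linarith : (0:ℝ) ≤ s - 1)]
      rw [mul_assoc]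
      gcongr
      · exact le_of_eq (Real.enorm_eq_ofReal_abs _).symm
      · exact le_of_eq (Real.enorm_eq_ofReal_abs (Dpi i u (update x i t))).symm
    calc (‖u x‖₊ : ℝ≥0∞) ^ s = (‖v x‖₊ : ℝ≥0∞) := hL
      _ ≤ ∫⁻ t in Iic (x i), ‖deriv (v ∘ update x i) t‖₊ :=
          le_trans (by simp [hv]) (h2.enorm_le_lintegral_Ici_deriv h1 (x i))
      _ ≤ ∫⁻ t, ‖deriv (v ∘ update x i) t‖₊ := lintegral_mono' Measure.restrict_le_self le_rfl
      _ ≤ ∫⁻ t, ENNReal.ofReal s *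
          ((‖u (update x i t)‖₊ : ℝ≥0∞) ^ (s - 1) * (‖Dpi i u (update x i t)‖₊ : ℝ≥0∞)) :=
          lintegral_mono hD
      _ = ENNReal.ofReal s *
          ∫⁻ t, (‖u (update x i t)‖₊ : ℝ≥0∞) ^ (s - 1) * (‖Dpi i u (update x i t)‖₊ : ℝ≥0∞) :=
          lintegral_const_mul' _ _ ENNReal.ofReal_ne_top

lemma holder_step {α : Type*} [MeasurableSpace α] {ν : Measure α} {V W : α → ℝ≥0∞}
    (hV : AEMeasurable V ν) (hW : AEMeasurable W ν) {p m s : ℝ} (hp : 1 ≤ p)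
    (hs : s - 1 = m * (1 - 1/p)) :
    ∫⁻ a, (V a) ^ (s-1) * W a ∂ν ≤
      (∫⁻ a, (V a) ^ m ∂ν) ^ (1 - 1/p) * (∫⁻ a, (W a) ^ p ∂ν) ^ (1/p) := by
  rcases eq_or_lt_of_le hp with hp1 | hp1
  · -- p = 1
    subst hp1
    have h0 : s - 1 = 0 := by rw [hs]; norm_num
    simp [h0]
  · -- 1 < p
    have hq := Real.HolderConjugate.conjExponent hp1
    set q := p.conjExponent with hqdef
    have hq0 : q ≠ 0 := hq.symm.pos.ne'
    have hp0 : p ≠ 0 := hq.pos.ne'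
    have h1q : 1/q = 1 - 1/p := by
      have := Real.HolderConjugate.inv_add_inv_eq_one hq
      field_simp at this ⊢
      try linarith
    have hsq : (s - 1) * q = m := by
      rw [hs, hqdef, Real.conjExponent]
      have hp1' : p - 1 ≠ 0 := sub_ne_zero_of_ne hp1.ne'
      field_simp
    calc ∫⁻ a, (V a) ^ (s-1) * W a ∂ν
        = ∫⁻ a, ((fun a => (V a)^(s-1)) * W) a ∂ν := by rfl
      _ ≤ (∫⁻ a, ((V a)^(s-1)) ^ q ∂ν) ^ (1/q) * (∫⁻ a, (W a) ^ p ∂ν) ^ (1/p) :=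
          ENNReal.lintegral_mul_le_Lp_mul_Lq ν hq.symm (hV.pow_const _) hW
      _ = (∫⁻ a, (V a) ^ m ∂ν) ^ (1 - 1/p) * (∫⁻ a, (W a) ^ p ∂ν) ^ (1/p) := by
          rw [← h1q]
          congr 1
          congr 1
          apply lintegral_congr
          intro a
          rw [← ENNReal.rpow_mul, hsq]

lemma core {u : (Fin 3 → ℝ) → ℝ} (hu : ContDiff ℝ 1 u) (h2u : HasCompactSupport u)
    {m : ℝ} {p : Fin 3 → ℝ} (hp : ∀ i, 1 ≤ p i) (hm : 0 < m)
    (hrel : 1 + 3/m = 1/p 0 + 1/p 1 + 1/p 2) :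
    (∫⁻ x : Fin 3 → ℝ, (‖u x‖₊ : ℝ≥0∞) ^ m) ^ ((1:ℝ)/m) ≤
      ENNReal.ofReal ((1 + m*(1 - 1/p 0)) * ((1 + m*(1 - 1/p 1)) * (1 + m*(1 - 1/p 2)))) *
      (((∫⁻ x : Fin 3 → ℝ, (‖Dpi 0 u x‖₊ : ℝ≥0∞) ^ p 0) ^ ((1:ℝ)/p 0)) ^ ((1:ℝ)/3) *
       (((∫⁻ x : Fin 3 → ℝ, (‖Dpi 1 u x‖₊ : ℝ≥0∞) ^ p 1) ^ ((1:ℝ)/p 1)) ^ ((1:ℝ)/3) *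
        ((∫⁻ x : Fin 3 → ℝ, (‖Dpi 2 u x‖₊ : ℝ≥0∞) ^ p 2) ^ ((1:ℝ)/p 2)) ^ ((1:ℝ)/3))) := by
  classical
  have hm0 : m ≠ 0 := hm.ne'
  have hp0 : ∀ i, 0 < p i := fun i => lt_of_lt_of_le one_pos (hp i)
  have hip : ∀ i, 1/p i ≤ 1 := fun i => by
    rw [div_le_one (hp0 i)]; exact hp i
  have hip0 : ∀ i, 0 < 1/p i := fun i => div_pos one_pos (hp0 i)
  set s : Fin 3 → ℝ := fun i => 1 + m*(1 - 1/p i) with hsdef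
  have hs1 : ∀ i, 1 ≤ s i := by
    intro i
    have : 0 ≤ m * (1 - 1/p i) := mul_nonneg hm.le (by linarith [hip i])
    simp only [hsdef]; linarith
  have hs0 : ∀ i, 0 ≤ s i := fun i => le_trans zero_le_one (hs1 i)
  have hm3 : m * (3/m) = 3 := by field_simp
  have hmge : (3:ℝ)/2 ≤ m := by
    have h1 : 3/m ≤ 2 := by linarith [hip 0, hip 1, hip 2]
    nlinarith
  have hssum : s 0 + s 1 + s 2 = 2*m := by
    have h1 : m * (1/p 0 + 1/p 1 + 1/p 2) = m * (1 + 3/m) := by rw [← hrel]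
    simp only [hsdef]
    nlinarith [hm3]
  set E : ℝ := 1 - 3/(2*m) with hEdef
  have hE : (1 - 1/p 0)/2 + ((1 - 1/p 1)/2 + (1 - 1/p 2)/2) = E := by
    have h1 : m * (1/p 0 + 1/p 1 + 1/p 2) = m * (1 + 3/m) := by rw [← hrel]
    have h2 : (3:ℝ)/(2*m) = (3/m)/2 := by
      rw [div_div]; ring_nf
    rw [hEdef, h2]
    have h3 : 1/p 0 + 1/p 1 + 1/p 2 = 1 + 3/m := by rw [← hrel]
    linarith
  have hE0 : 0 ≤ E := by
    rw [hEdef]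
    have : 3/(2*m) ≤ 1 := by
      rw [div_le_one (by linarith)]
      linarith
    linarith
  -- continuity / measurability
  have hcu : Continuous u := hu.continuous
  have hcD : ∀ i, Continuous (Dpi i u) := by
    intro i
    exact (hu.continuous_fderiv one_ne_zero).clm_apply continuous_const
  set f : Fin 3 → ((Fin 3 → ℝ) → ℝ≥0∞) := fun i y =>
    (‖u y‖₊ : ℝ≥0∞) ^ (s i - 1) * (‖Dpi i u y‖₊ : ℝ≥0∞) with hfdef
  have hmf : ∀ i, Measurable (f i) := fun i =>
    ((hcu.measurable.nnnorm.coe_nnreal_ennreal.pow_const _).mul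
      (hcD i).measurable.nnnorm.coe_nnreal_ennreal)
  set J : ℝ≥0∞ := ∫⁻ x : Fin 3 → ℝ, (‖u x‖₊ : ℝ≥0∞) ^ m with hJdef
  set N : Fin 3 → ℝ≥0∞ := fun i =>
    (∫⁻ x : Fin 3 → ℝ, (‖Dpi i u x‖₊ : ℝ≥0∞) ^ p i) ^ ((1:ℝ)/p i) with hNdef
  set S2 : ℝ≥0∞ := ENNReal.ofReal (s 0) ^ ((1:ℝ)/2) *
      (ENNReal.ofReal (s 1) ^ ((1:ℝ)/2) * ENNReal.ofReal (s 2) ^ ((1:ℝ)/2)) with hS2def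
  have hS2top : S2 ≠ ⊤ := by
    rw [hS2def]
    exact ENNReal.mul_ne_top (ENNReal.rpow_ne_top_of_nonneg (by norm_num) ENNReal.ofReal_ne_top)
      (ENNReal.mul_ne_top (ENNReal.rpow_ne_top_of_nonneg (by norm_num) ENNReal.ofReal_ne_top)
        (ENNReal.rpow_ne_top_of_nonneg (by norm_num) ENNReal.ofReal_ne_top))
  -- J is finite
  have hJtop : J ≠ ⊤ := by
    have hmem : MemLp u (ENNReal.ofReal m) volume := hcu.memLp_of_hasCompactSupport h2u
    have h1 : ENNReal.ofReal m ≠ 0 := by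
      simp only [ne_eq, ENNReal.ofReal_eq_zero, not_le]; exact hm
    have hlt := hmem.eLpNorm_lt_top
    rw [eLpNorm_eq_lintegral_rpow_enorm_toReal h1 ENNReal.ofReal_ne_top,
      ENNReal.toReal_ofReal hm.le] at hlt
    intro h
    change J ^ (1/m) < ∞ at hlt
    rw [h] at hlt
    rw [ENNReal.top_rpow_of_pos (by positivity : (0:ℝ) < 1/m)] at hlt
    exact (lt_irrefl _ hlt)
  by_cases hJ0 : J = 0
  · rw [hJ0, ENNReal.zero_rpow_of_pos (by positivity : (0:ℝ) < 1/m)]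
    exact zero_le
  -- pointwise bound
  have key1 : ∀ x : Fin 3 → ℝ, (‖u x‖₊ : ℝ≥0∞) ^ m ≤
      S2 * ∏ i, (∫⁻ t, f i (update x i t)) ^ ((1:ℝ)/2) := by
    intro x
    have hxsplit : (‖u x‖₊ : ℝ≥0∞) ^ m =
        ((‖u x‖₊ : ℝ≥0∞) ^ (s 0)) ^ ((1:ℝ)/2) *
        (((‖u x‖₊ : ℝ≥0∞) ^ (s 1)) ^ ((1:ℝ)/2) *
         ((‖u x‖₊ : ℝ≥0∞) ^ (s 2)) ^ ((1:ℝ)/2)) := by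
      rw [← ENNReal.rpow_mul, ← ENNReal.rpow_mul, ← ENNReal.rpow_mul,
        ← ENNReal.rpow_add_of_nonneg _ _ (mul_nonneg (hs0 1) (by norm_num))
          (mul_nonneg (hs0 2) (by norm_num)),
        ← ENNReal.rpow_add_of_nonneg _ _ (mul_nonneg (hs0 0) (by norm_num))
          (add_nonneg (mul_nonneg (hs0 1) (by norm_num)) (mul_nonneg (hs0 2) (by norm_num)))]
      congr 1
      have h := hssum
      simp only [hsdef] at h ⊢
      linarith
    rw [hxsplit, Fin.prod_univ_three, hS2def]
    have b0 := ftc_pointwise hu h2u (hs1 0) 0 x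
    have b1 := ftc_pointwise hu h2u (hs1 1) 1 x
    have b2 := ftc_pointwise hu h2u (hs1 2) 2 x
    calc ((‖u x‖₊ : ℝ≥0∞) ^ (s 0)) ^ ((1:ℝ)/2) *
        (((‖u x‖₊ : ℝ≥0∞) ^ (s 1)) ^ ((1:ℝ)/2) * ((‖u x‖₊ : ℝ≥0∞) ^ (s 2)) ^ ((1:ℝ)/2))
        ≤ (ENNReal.ofReal (s 0) * ∫⁻ t, f 0 (update x 0 t)) ^ ((1:ℝ)/2) *
          ((ENNReal.ofReal (s 1) * ∫⁻ t, f 1 (update x 1 t)) ^ ((1:ℝ)/2) *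
           (ENNReal.ofReal (s 2) * ∫⁻ t, f 2 (update x 2 t)) ^ ((1:ℝ)/2)) := by
          gcongr <;> first | exact b0 | exact b1 | exact b2
      _ = (ENNReal.ofReal (s 0) ^ ((1:ℝ)/2) *
          (ENNReal.ofReal (s 1) ^ ((1:ℝ)/2) * ENNReal.ofReal (s 2) ^ ((1:ℝ)/2))) *
          ((∫⁻ t, f 0 (update x 0 t)) ^ ((1:ℝ)/2) *
           ((∫⁻ t, f 1 (update x 1 t)) ^ ((1:ℝ)/2) * (∫⁻ t, f 2 (update x 2 t)) ^ ((1:ℝ)/2))) := by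
          rw [ENNReal.mul_rpow_of_nonneg _ _ (by norm_num : (0:ℝ) ≤ 1/2),
            ENNReal.mul_rpow_of_nonneg _ _ (by norm_num : (0:ℝ) ≤ 1/2),
            ENNReal.mul_rpow_of_nonneg _ _ (by norm_num : (0:ℝ) ≤ 1/2)]
          ring
      _ = ENNReal.ofReal (s 0) ^ ((1:ℝ)/2) *
          (ENNReal.ofReal (s 1) ^ ((1:ℝ)/2) * ENNReal.ofReal (s 2) ^ ((1:ℝ)/2)) *
          ((∫⁻ t, f 0 (update x 0 t)) ^ ((1:ℝ)/2) * (∫⁻ t, f 1 (update x 1 t)) ^ ((1:ℝ)/2) *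
           (∫⁻ t, f 2 (update x 2 t)) ^ ((1:ℝ)/2)) := by ring
  -- integrate and apply Loomis–Whitney
  have key2 : J ≤ S2 * ((∫⁻ y : Fin 3 → ℝ, f 0 y) ^ ((1:ℝ)/2) *
      ((∫⁻ y : Fin 3 → ℝ, f 1 y) ^ ((1:ℝ)/2) * (∫⁻ y : Fin 3 → ℝ, f 2 y) ^ ((1:ℝ)/2))) := by
    calc J ≤ ∫⁻ x : Fin 3 → ℝ, S2 * ∏ i, (∫⁻ t, f i (update x i t)) ^ ((1:ℝ)/2) :=
          lintegral_mono key1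
      _ = S2 * ∫⁻ x : Fin 3 → ℝ, ∏ i, (∫⁻ t, f i (update x i t)) ^ ((1:ℝ)/2) :=
          lintegral_const_mul' _ _ hS2top
      _ ≤ S2 * ∏ i, (∫⁻ y : Fin 3 → ℝ, f i y) ^ ((1:ℝ)/2) := by
          gcongr
          exact loomis_whitney hmf
      _ = _ := by rw [Fin.prod_univ_three, hS2def]; ring
  -- Hölder on each factor
  have key3 : ∀ i, (∫⁻ y : Fin 3 → ℝ, f i y) ≤ J ^ (1 - 1/p i) * N i := by
    intro i
    rw [hfdef, hNdef, hJdef]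
    exact holder_step (hcu.measurable.nnnorm.coe_nnreal_ennreal).aemeasurable
      ((hcD i).measurable.nnnorm.coe_nnreal_ennreal).aemeasurable (hp i)
      (by simp only [hsdef]; ring)
  -- combine
  have hsplitJ : ∀ (a : ℝ) (X : ℝ≥0∞), (J ^ a * X) ^ ((1:ℝ)/2) = J ^ (a/2) * X ^ ((1:ℝ)/2) := by
    intro a X
    rw [ENNReal.mul_rpow_of_nonneg _ _ (by norm_num : (0:ℝ) ≤ 1/2), ← ENNReal.rpow_mul,
      show a * ((1:ℝ)/2) = a/2 by ring]
  have main : J ≤ (S2 * (N 0 ^ ((1:ℝ)/2) * (N 1 ^ ((1:ℝ)/2) * N 2 ^ ((1:ℝ)/2)))) * J ^ E := by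
    calc J ≤ S2 * ((J ^ (1 - 1/p 0) * N 0) ^ ((1:ℝ)/2) *
        ((J ^ (1 - 1/p 1) * N 1) ^ ((1:ℝ)/2) * (J ^ (1 - 1/p 2) * N 2) ^ ((1:ℝ)/2))) := by
          refine le_trans key2 ?_
          gcongr <;> first | exact key3 0 | exact key3 1 | exact key3 2
      _ = S2 * ((J ^ ((1 - 1/p 0)/2) * N 0 ^ ((1:ℝ)/2)) *
          ((J ^ ((1 - 1/p 1)/2) * N 1 ^ ((1:ℝ)/2)) * (J ^ ((1 - 1/p 2)/2) * N 2 ^ ((1:ℝ)/2)))) := by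
          rw [hsplitJ, hsplitJ, hsplitJ]
      _ = (S2 * (N 0 ^ ((1:ℝ)/2) * (N 1 ^ ((1:ℝ)/2) * N 2 ^ ((1:ℝ)/2)))) *
          (J ^ ((1 - 1/p 0)/2) * (J ^ ((1 - 1/p 1)/2) * J ^ ((1 - 1/p 2)/2))) := by ring
      _ = (S2 * (N 0 ^ ((1:ℝ)/2) * (N 1 ^ ((1:ℝ)/2) * N 2 ^ ((1:ℝ)/2)))) * J ^ E := by
          rw [← ENNReal.rpow_add_of_nonneg _ _
              (by linarith [hip 1] : (0:ℝ) ≤ (1 - 1/p 1)/2)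
              (by linarith [hip 2] : (0:ℝ) ≤ (1 - 1/p 2)/2),
            ← ENNReal.rpow_add_of_nonneg _ _
              (by linarith [hip 0] : (0:ℝ) ≤ (1 - 1/p 0)/2)
              (by linarith [hip 1, hip 2] : (0:ℝ) ≤ (1 - 1/p 1)/2 + ((1 - 1/p 2)/2)),
            hE]
  have hJE0 : J ^ E ≠ 0 := (ENNReal.rpow_pos (pos_iff_ne_zero.mpr hJ0) hJtop).ne'
  have hJEtop : J ^ E ≠ ⊤ := ENNReal.rpow_ne_top_of_nonneg hE0 hJtop
  have key4 : J ^ ((3:ℝ)/(2*m)) ≤ S2 * (N 0 ^ ((1:ℝ)/2) * (N 1 ^ ((1:ℝ)/2) * N 2 ^ ((1:ℝ)/2))) := by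
    have h1 : J ^ ((3:ℝ)/(2*m)) = J / J ^ E := by
      rw [show (3:ℝ)/(2*m) = 1 - E by rw [hEdef]; ring, ENNReal.rpow_sub _ _ hJ0 hJtop,
        ENNReal.rpow_one]
    rw [h1, ENNReal.div_le_iff hJE0 hJEtop]
    exact main
  -- conclude
  have h23 : (0:ℝ) ≤ 2/3 := by norm_num
  have hsplit3 : ∀ (X Y Z : ℝ≥0∞),
      (X ^ ((1:ℝ)/2) * (Y ^ ((1:ℝ)/2) * Z ^ ((1:ℝ)/2))) ^ ((2:ℝ)/3) =
      X ^ ((1:ℝ)/3) * (Y ^ ((1:ℝ)/3) * Z ^ ((1:ℝ)/3)) := by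
    intro X Y Z
    rw [ENNReal.mul_rpow_of_nonneg _ _ h23, ENNReal.mul_rpow_of_nonneg _ _ h23,
      ← ENNReal.rpow_mul, ← ENNReal.rpow_mul, ← ENNReal.rpow_mul]
    norm_num
  have key5 : J ^ ((1:ℝ)/m) ≤ S2 ^ ((2:ℝ)/3) *
      (N 0 ^ ((1:ℝ)/3) * (N 1 ^ ((1:ℝ)/3) * N 2 ^ ((1:ℝ)/3))) := by
    have h1 : J ^ ((1:ℝ)/m) = (J ^ ((3:ℝ)/(2*m))) ^ ((2:ℝ)/3) := by
      rw [← ENNReal.rpow_mul]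
      congr 1
      field_simp
    rw [h1]
    refine le_trans (ENNReal.rpow_le_rpow key4 h23) ?_
    rw [ENNReal.mul_rpow_of_nonneg _ _ h23, hsplit3, hsplit3]
  refine le_trans key5 ?_
  have hconst : S2 ^ ((2:ℝ)/3) ≤
      ENNReal.ofReal ((1 + m*(1 - 1/p 0)) * ((1 + m*(1 - 1/p 1)) * (1 + m*(1 - 1/p 2)))) := by
    rw [hS2def, hsplit3]
    have hb : ∀ i, ENNReal.ofReal (s i) ^ ((1:ℝ)/3) ≤ ENNReal.ofReal (s i) := by
      intro i
      have h1 : (1:ℝ≥0∞) ≤ ENNReal.ofReal (s i) := by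
        rw [show (1:ℝ≥0∞) = ENNReal.ofReal 1 by simp]
        exact ENNReal.ofReal_le_ofReal (hs1 i)
      calc ENNReal.ofReal (s i) ^ ((1:ℝ)/3) ≤ ENNReal.ofReal (s i) ^ (1:ℝ) :=
            ENNReal.rpow_le_rpow_of_exponent_le h1 (by norm_num)
        _ = ENNReal.ofReal (s i) := ENNReal.rpow_one _
    calc ENNReal.ofReal (s 0) ^ ((1:ℝ)/3) *
        (ENNReal.ofReal (s 1) ^ ((1:ℝ)/3) * ENNReal.ofReal (s 2) ^ ((1:ℝ)/3))
        ≤ ENNReal.ofReal (s 0) * (ENNReal.ofReal (s 1) * ENNReal.ofReal (s 2)) :=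
          mul_le_mul' (hb 0) (mul_le_mul' (hb 1) (hb 2))
      _ = ENNReal.ofReal ((1 + m*(1 - 1/p 0)) * ((1 + m*(1 - 1/p 1)) * (1 + m*(1 - 1/p 2)))) := by
          rw [← ENNReal.ofReal_mul (hs0 1), ← ENNReal.ofReal_mul (hs0 0)]
  exact mul_le_mul' hconst le_rfl

/-- Anisotropic Sobolev-type inequality (Lemma 1.2). -/
theorem stmt_6 (μ θ l k : ℝ)
    (hμ : 1 ≤ μ) (hθ : 1 ≤ θ) (hl : 1 ≤ l) (hk : 1 ≤ k)
    (hsum : 1 < 1/θ + 1/l + 1/k)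
    (hrel : 1 + 3/μ = 1/θ + 1/l + 1/k) :
    ∃ C : ℝ≥0, 0 < C ∧ ∀ φ : EuclideanSpace ℝ (Fin 3) → ℝ,
      ContDiff ℝ (⊤ : ℕ∞) φ → HasCompactSupport φ →
      eLpNorm φ (ENNReal.ofReal μ) volume ≤
        C * (eLpNorm (pd 0 φ) (ENNReal.ofReal θ) volume) ^ ((1:ℝ)/3) *
            (eLpNorm (pd 1 φ) (ENNReal.ofReal l) volume) ^ ((1:ℝ)/3) *
            (eLpNorm (pd 2 φ) (ENNReal.ofReal k) volume) ^ ((1:ℝ)/3) := by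
  have hμ0 : (0:ℝ) < μ := lt_of_lt_of_le one_pos hμ
  have hθ0 : (0:ℝ) < θ := lt_of_lt_of_le one_pos hθ
  have hl0 : (0:ℝ) < l := lt_of_lt_of_le one_pos hl
  have hk0 : (0:ℝ) < k := lt_of_lt_of_le one_pos hk
  set p : Fin 3 → ℝ := ![θ, l, k] with hpdef
  have hp : ∀ i, 1 ≤ p i := by
    intro i; fin_cases i <;> simp [hpdef, hθ, hl, hk]
  have hp00 : p 0 = θ := rfl
  have hp11 : p 1 = l := rfl
  have hp22 : p 2 = k := rfl
  have hrel' : 1 + 3/μ = 1/p 0 + 1/p 1 + 1/p 2 := by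
    rw [hp00, hp11, hp22]; exact hrel
  set s : Fin 3 → ℝ := fun i => 1 + μ*(1 - 1/p i) with hsdef
  have hs1 : ∀ i, 1 ≤ s i := by
    intro i
    have h1 : 1/p i ≤ 1 := by
      rw [div_le_one (lt_of_lt_of_le one_pos (hp i))]; exact hp i
    have : 0 ≤ μ * (1 - 1/p i) := mul_nonneg hμ0.le (by linarith)
    simp only [hsdef]; linarith
  have hCpos : (0:ℝ) < s 0 * (s 1 * s 2) :=
    mul_pos (lt_of_lt_of_le one_pos (hs1 0))
      (mul_pos (lt_of_lt_of_le one_pos (hs1 1)) (lt_of_lt_of_le one_pos (hs1 2)))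
  refine ⟨(s 0 * (s 1 * s 2)).toNNReal, Real.toNNReal_pos.mpr hCpos, ?_⟩
  intro φ hφ h2φ
  have hvol : ∀ F : EuclideanSpace ℝ (Fin 3) → ℝ≥0∞,
      ∫⁻ y, F y = ∫⁻ x : Fin 3 → ℝ, F (WithLp.toLp 2 x) := fun F =>
    ((PiLp.volume_preserving_toLp (Fin 3)).lintegral_comp_emb
      (by exact (MeasurableEquiv.toLp 2 (Fin 3 → ℝ)).measurableEmbedding) F).symm
  set e := EuclideanSpace.equiv (Fin 3) ℝ with hedef
  set ψ : (Fin 3 → ℝ) → ℝ := φ ∘ ⇑e.symm with hψdef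
  have hψ : ContDiff ℝ 1 ψ := (hφ.of_le (by simp)).comp e.symm.contDiff
  have h2ψ : HasCompactSupport ψ := h2φ.comp_homeomorph e.symm.toHomeomorph
  have hpd : ∀ (i : Fin 3) (x : Fin 3 → ℝ), pd i φ (e.symm x) = Dpi i ψ x := by
    intro i x
    rw [hψdef, hedef, Dpi, ContinuousLinearEquiv.comp_right_fderiv]
    rfl
  have hLHS : eLpNorm φ (ENNReal.ofReal μ) volume =
      (∫⁻ x : Fin 3 → ℝ, (‖ψ x‖₊ : ℝ≥0∞) ^ μ) ^ ((1:ℝ)/μ) := by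
    rw [eLpNorm_eq_lintegral_rpow_enorm_toReal
      (by simp only [ne_eq, ENNReal.ofReal_eq_zero, not_le]; exact hμ0) ENNReal.ofReal_ne_top,
      ENNReal.toReal_ofReal hμ0.le, hvol]
    rfl
  have hRHS : ∀ (i : Fin 3) (q : ℝ), 0 < q →
      eLpNorm (pd i φ) (ENNReal.ofReal q) volume =
      (∫⁻ x : Fin 3 → ℝ, (‖Dpi i ψ x‖₊ : ℝ≥0∞) ^ q) ^ ((1:ℝ)/q) := by
    intro i q hq
    rw [eLpNorm_eq_lintegral_rpow_enorm_toReal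
      (by simp only [ne_eq, ENNReal.ofReal_eq_zero, not_le]; exact hq) ENNReal.ofReal_ne_top,
      ENNReal.toReal_ofReal hq.le, hvol]
    congr 1
    apply lintegral_congr
    intro x
    have h : pd i φ (WithLp.toLp 2 x) = Dpi i ψ x := hpd i x
    rw [h]
    rfl
  have hcore := core hψ h2ψ hp hμ0 hrel'
  rw [hLHS, hRHS 0 θ hθ0, hRHS 1 l hl0, hRHS 2 k hk0]
  have hcoe : ((s 0 * (s 1 * s 2)).toNNReal : ℝ≥0∞) =
      ENNReal.ofReal ((1 + μ*(1 - 1/p 0)) * ((1 + μ*(1 - 1/p 1)) * (1 + μ*(1 - 1/p 2)))) := by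
    rfl
  rw [hp00, hp11, hp22] at hcore hcoe
  refine le_trans hcore (le_of_eq ?_)
  rw [← hcoe]
  ring
end

section
/- For any smooth, rapidly decaying vector field $u$ on $\mathbb{R}^3$, $\|\nabla u\|_{L^3(\mathbb{R}^3)}^3 \le C\, \|\nabla u\|_{L^2}^{3/2}\, \|\nabla^2 u\|_{L^2}\, \|\nabla \partial_3 u\|_{L^2}^{1/2}$ for an absolute constant $C$. -/
open MeasureTheory NNReal

/-!
Every entry `g = ∂ⱼuᵢ` of `∇u` is a Schwartz function. On each coordinate line
`|v(p)| ≤ ∫ |∂ₖv|`, and the Loomis–Whitney inequality combines the three line bounds into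
Gagliardo's inequality `∫ |v|^{3/2} ≤ ∏ₖ (∫ |∂ₖv|)^{1/2}`. For `v = g⁴` Cauchy–Schwarz gives
`∫ |∂ₖv| ≤ 4 ‖g‖₆³ ‖∂ₖg‖₂`, whence the anisotropic Sobolev inequality
`‖g‖₆⁶ ≤ 4096 ∏ₖ ‖∂ₖg‖₂²`, and interpolating `‖g‖₃³ ≤ ‖g‖₂^{3/2} ‖g‖₆^{3/2}` yields
`‖g‖₃³ ≤ 8 ‖g‖₂^{3/2} (‖∂₁g‖₂ ‖∂₂g‖₂ ‖∂₃g‖₂)^{1/2}`. Finally `‖∂₁g‖₂, ‖∂₂g‖₂ ≤ ‖∇²u‖₂`,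
`‖∂₃g‖₂ = ‖∂ⱼ∂₃uᵢ‖₂ ≤ ‖∇∂₃u‖₂` by the symmetry of second derivatives, and the nine entries are
summed with the power-mean inequality. (Coordinates are indexed by `Fin 3`, so `∂₃` is `pd 2`.)
-/

open Filter Set Topology
open scoped ENNReal SchwartzMap

local notation "ℝ³" => EuclideanSpace ℝ (Fin 3)

theorem ENNReal.rpow_half_sq (a : ℝ≥0∞) : (a ^ (1/2 : ℝ)) ^ 2 = a := by
  rw [← ENNReal.rpow_natCast, ← ENNReal.rpow_mul]
  norm_num

theorem lintegral_pow_three_le {α : Type*} [MeasurableSpace α] {μ : Measure α}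
    {f : α → ℝ≥0∞} (hf : AEMeasurable f μ) :
    ∫⁻ a, f a ^ 3 ∂μ ≤ (∫⁻ a, f a ^ 2 ∂μ) ^ (3/4 : ℝ) * (∫⁻ a, f a ^ 6 ∂μ) ^ (1/4 : ℝ) := by
  refine le_of_eq_of_le (lintegral_congr fun a => ?_) (ENNReal.lintegral_mul_norm_pow_le
    (hf.pow_const 2) (hf.pow_const 6) (by norm_num) (by norm_num) (by norm_num))
  rw [← ENNReal.rpow_natCast_mul, ← ENNReal.rpow_natCast_mul,
    ← ENNReal.rpow_add_of_nonneg _ _ (by norm_num) (by norm_num), ← ENNReal.rpow_natCast]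
  norm_num

theorem lintegral_pow_three_mul_sq_le {α : Type*} [MeasurableSpace α] {μ : Measure α}
    {f g : α → ℝ≥0∞} (hf : AEMeasurable f μ) (hg : AEMeasurable g μ) :
    (∫⁻ a, f a ^ 3 * g a ∂μ) ^ 2 ≤ (∫⁻ a, f a ^ 6 ∂μ) * ∫⁻ a, g a ^ 2 ∂μ := by
  have hCS := ENNReal.lintegral_mul_norm_pow_le (hf.pow_const 6) (hg.pow_const 2)
    (by norm_num : (0 : ℝ) ≤ 1/2) (by norm_num : (0 : ℝ) ≤ 1/2) (by norm_num)
  have hfg : ∀ a, (f a ^ 6) ^ (1/2 : ℝ) * (g a ^ 2) ^ (1/2 : ℝ) = f a ^ 3 * g a := fun a => by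
    rw [← ENNReal.rpow_natCast_mul, ← ENNReal.rpow_natCast_mul, ← ENNReal.rpow_natCast]
    norm_num
  simp only [hfg] at hCS
  simpa only [mul_pow, ENNReal.rpow_half_sq] using pow_le_pow_left₀ zero_le hCS 2

theorem lintegral_const_mul_sqrt_mul_le {α : Type*} [MeasurableSpace α] {μ : Measure α}
    {f g : α → ℝ≥0∞} (hf : AEMeasurable f μ) (hg : AEMeasurable g μ) (c : ℝ≥0∞) :
    ∫⁻ a, c * (f a ^ (1/2 : ℝ) * g a ^ (1/2 : ℝ)) ∂μ
      ≤ c * ((∫⁻ a, f a ∂μ) ^ (1/2 : ℝ) * (∫⁻ a, g a ∂μ) ^ (1/2 : ℝ)) := by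
  rw [lintegral_const_mul'' _ (by fun_prop)]
  gcongr
  exact ENNReal.lintegral_mul_norm_pow_le hf hg (by norm_num) (by norm_num) (by norm_num)

theorem ENNReal.sum_sq_rpow_three_halves_le {ι : Type*} [Fintype ι] (a : ι → ℝ≥0∞) :
    (∑ p, a p ^ 2) ^ (3/2 : ℝ) ≤ (Fintype.card ι : ℝ≥0∞) ^ (1/2 : ℝ) * ∑ p, a p ^ 3 := by
  refine (ENNReal.rpow_sum_le_const_mul_sum_rpow _ _ (by norm_num)).trans_eq ?_
  have hsq : ∀ p, (a p ^ 2) ^ (3/2 : ℝ) = a p ^ 3 := fun p => by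
    rw [← ENNReal.rpow_natCast_mul, ← ENNReal.rpow_natCast]
    norm_num
  simp only [hsq, Finset.card_univ]
  norm_num

theorem tendsto_cocompact_of_abs_le_norm {X : Type*} [NormedAddCommGroup X] [ProperSpace X]
    {γ : ℝ → X} (hγ : ∀ s, |s| ≤ ‖γ s‖) : Tendsto γ atBot (cocompact X) := by
  rw [← Metric.cobounded_eq_cocompact, ← tendsto_norm_atTop_iff_cobounded]
  exact tendsto_atTop_mono hγ tendsto_abs_atBot_atTop

theorem hasDerivAt_comp_add_sub_smul {E : Type*} [NormedAddCommGroup E] [NormedSpace ℝ E]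
    {f : E → ℝ} {x : E} (hf : DifferentiableAt ℝ f x) (e : E) (t : ℝ) :
    HasDerivAt (fun s => f (x + (s - t) • e)) (fderiv ℝ f x e) t := by
  have hline : HasDerivAt (fun s : ℝ => x + (s - t) • e) e t := by
    simpa using (((hasDerivAt_id t).sub_const t).smul_const e).const_add x
  exact hf.hasFDerivAt.comp_hasDerivAt_of_eq t hline (by simp)

theorem enorm_le_lintegral_enorm_of_hasDerivAt {g g' : ℝ → ℝ}
    (hg : ∀ t, HasDerivAt g (g' t) t) (h_bot : Tendsto g atBot (𝓝 0)) (b : ℝ) :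
    ‖g b‖ₑ ≤ ∫⁻ t, ‖g' t‖ₑ := by
  have hg' : Measurable g' := by
    rw [show g' = deriv g from funext fun t => (hg t).deriv.symm]
    exact measurable_deriv g
  by_cases hfin : ∫⁻ t in Iic b, ‖g' t‖ₑ = ∞
  · have h_top : ∫⁻ t, ‖g' t‖ₑ = ∞ := eq_top_iff.2 (hfin ▸ setLIntegral_le_lintegral _ _)
    simp [h_top]
  have hint : IntegrableOn g' (Iic b) := ⟨hg'.aestronglyMeasurable, lt_top_iff_ne_top.2 hfin⟩
  have hFTC : ∫ t in Iic b, g' t = g b := by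
    simpa using integral_Iic_of_hasDerivAt_of_tendsto' (fun x _ => hg x) hint h_bot
  calc ‖g b‖ₑ = ‖∫ t in Iic b, g' t‖ₑ := by rw [hFTC]
    _ ≤ ∫⁻ t in Iic b, ‖g' t‖ₑ := enorm_integral_le_lintegral_enorm _
    _ ≤ ∫⁻ t, ‖g' t‖ₑ := setLIntegral_le_lintegral _ _

theorem ENNReal.ofReal_sum_sq {κ : Type*} [Fintype κ] (y : κ → ℝ) :
    ENNReal.ofReal (∑ q, y q ^ 2) = ∑ q, ‖y q‖ₑ ^ 2 := by
  rw [ENNReal.ofReal_sum_of_nonneg fun q _ => sq_nonneg _]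
  refine Finset.sum_congr rfl fun q _ => ?_
  rw [← sq_abs, ENNReal.ofReal_pow (abs_nonneg _), Real.enorm_eq_ofReal_abs]

section SumOfSquares

variable {κ X : Type*} [Fintype κ] [MeasurableSpace X] {μ : Measure X} {φ : κ → X → ℝ}

theorem integral_sum_sq (hφ : ∀ q, AEStronglyMeasurable (φ q) μ) :
    ∫ x, ∑ q, φ q x ^ 2 ∂μ = (∑ q, ∫⁻ x, ‖φ q x‖ₑ ^ 2 ∂μ).toReal := by
  rw [integral_eq_lintegral_of_nonneg_ae (ae_of_all _ fun x => by positivity) (by fun_prop),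
    ← lintegral_finsetSum' _ fun q _ => by fun_prop]
  simp only [ENNReal.ofReal_sum_sq]

theorem integral_sum_sq_rpow (hφ : ∀ q, AEStronglyMeasurable (φ q) μ) {r : ℝ} (hr : 0 ≤ r) :
    ∫ x, (∑ q, φ q x ^ 2) ^ r ∂μ = (∫⁻ x, (∑ q, ‖φ q x‖ₑ ^ 2) ^ r ∂μ).toReal := by
  have hsum : AEMeasurable (fun x => ∑ q, φ q x ^ 2) μ := by fun_prop
  rw [integral_eq_lintegral_of_nonneg_ae (ae_of_all _ fun x => by positivity)
    (hsum.pow_const r).aestronglyMeasurable]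
  simp only [← ENNReal.ofReal_sum_sq,
    ENNReal.ofReal_rpow_of_nonneg (Finset.sum_nonneg fun q _ => sq_nonneg _) hr]

end SumOfSquares

theorem SchwartzMap.lintegral_enorm_pow_ne_top {E : Type*} [NormedAddCommGroup E]
    [NormedSpace ℝ E] [MeasurableSpace E] [BorelSpace E] {μ : Measure E} [μ.HasTemperateGrowth]
    (g : 𝓢(E, ℝ)) {n : ℕ} (hn : n ≠ 0) : ∫⁻ x, ‖g x‖ₑ ^ n ∂μ ≠ ∞ := by
  simpa using (lintegral_rpow_enorm_lt_top_of_eLpNorm_lt_top (p := n) (by simpa) (by simp)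
    (g.eLpNorm_lt_top n μ)).ne

theorem lintegral_eq_lintegral_lintegral_fst {h : ℝ × ℝ × ℝ → ℝ≥0∞} (hh : Measurable h) :
    ∫⁻ p, h p = ∫⁻ q : ℝ × ℝ, ∫⁻ t, h (t, q) := by
  rw [Measure.volume_eq_prod, lintegral_prod_symm _ hh.aemeasurable]

theorem lintegral_eq_lintegral_lintegral_snd {h : ℝ × ℝ × ℝ → ℝ≥0∞} (hh : Measurable h) :
    ∫⁻ p, h p = ∫⁻ q : ℝ × ℝ, ∫⁻ t, h (q.1, t, q.2) := by
  have hline : Measurable fun z : (ℝ × ℝ) × ℝ => h (z.1.1, z.2, z.1.2) := by fun_prop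
  simp only [Measure.volume_eq_prod]
  rw [lintegral_prod _ hh.aemeasurable, lintegral_prod _ hline.lintegral_prod_right'.aemeasurable]
  exact lintegral_congr fun a =>
    lintegral_prod_symm _ (hh.comp measurable_prodMk_left).aemeasurable

theorem lintegral_eq_lintegral_lintegral_thd {h : ℝ × ℝ × ℝ → ℝ≥0∞} (hh : Measurable h) :
    ∫⁻ p, h p = ∫⁻ q : ℝ × ℝ, ∫⁻ t, h (q.1, q.2, t) := by
  have hline : Measurable fun z : (ℝ × ℝ) × ℝ => h (z.1.1, z.1.2, z.2) := by fun_prop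
  simp only [Measure.volume_eq_prod]
  rw [lintegral_prod _ hh.aemeasurable, lintegral_prod _ hline.lintegral_prod_right'.aemeasurable]
  exact lintegral_congr fun a => lintegral_prod _ (hh.comp measurable_prodMk_left).aemeasurable

/-- The Loomis–Whitney inequality in `ℝ³`. -/
theorem lintegral_sqrt_mul_sqrt_mul_sqrt_le {A B C : ℝ × ℝ → ℝ≥0∞}
    (hA : Measurable A) (hB : Measurable B) (hC : Measurable C) :
    ∫⁻ p : ℝ × ℝ × ℝ, A p.2 ^ (1/2 : ℝ) * B (p.1, p.2.2) ^ (1/2 : ℝ) * C (p.1, p.2.1) ^ (1/2 : ℝ)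
      ≤ (∫⁻ q, A q) ^ (1/2 : ℝ) * (∫⁻ q, B q) ^ (1/2 : ℝ) * (∫⁻ q, C q) ^ (1/2 : ℝ) := by
  set B' : ℝ → ℝ≥0∞ := fun c => ∫⁻ a, B (a, c)
  set C' : ℝ → ℝ≥0∞ := fun b => ∫⁻ a, C (a, b)
  have hB' : Measurable B' := hB.lintegral_prod_left'
  have hC' : Measurable C' := hC.lintegral_prod_left'
  calc ∫⁻ p : ℝ × ℝ × ℝ,
        A p.2 ^ (1/2 : ℝ) * B (p.1, p.2.2) ^ (1/2 : ℝ) * C (p.1, p.2.1) ^ (1/2 : ℝ)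
      = ∫⁻ q : ℝ × ℝ, ∫⁻ a,
          A q ^ (1/2 : ℝ) * (B (a, q.2) ^ (1/2 : ℝ) * C (a, q.1) ^ (1/2 : ℝ)) := by
        rw [Measure.volume_eq_prod, lintegral_prod_symm _ (by fun_prop)]
        simp only [mul_assoc]
    _ ≤ ∫⁻ q : ℝ × ℝ, A q ^ (1/2 : ℝ) * (B' q.2 ^ (1/2 : ℝ) * C' q.1 ^ (1/2 : ℝ)) := by
        gcongr with q
        exact lintegral_const_mul_sqrt_mul_le (by fun_prop) (by fun_prop) _
    _ = ∫⁻ b, ∫⁻ c, C' b ^ (1/2 : ℝ) * (A (b, c) ^ (1/2 : ℝ) * B' c ^ (1/2 : ℝ)) := by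
        rw [Measure.volume_eq_prod, lintegral_prod _ (by fun_prop)]
        simp only [mul_comm, mul_left_comm]
    _ ≤ ∫⁻ b, C' b ^ (1/2 : ℝ) * ((∫⁻ c, A (b, c)) ^ (1/2 : ℝ) * (∫⁻ c, B' c) ^ (1/2 : ℝ)) := by
        gcongr with b
        exact lintegral_const_mul_sqrt_mul_le (by fun_prop) (by fun_prop) _
    _ = (∫⁻ c, B' c) ^ (1/2 : ℝ) * ∫⁻ b, C' b ^ (1/2 : ℝ) * (∫⁻ c, A (b, c)) ^ (1/2 : ℝ) := by
        rw [← lintegral_const_mul'' _ (by fun_prop)]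
        exact lintegral_congr fun b => by ring
    _ ≤ (∫⁻ c, B' c) ^ (1/2 : ℝ) *
          ((∫⁻ b, C' b) ^ (1/2 : ℝ) * (∫⁻ b, ∫⁻ c, A (b, c)) ^ (1/2 : ℝ)) := by
        gcongr
        exact ENNReal.lintegral_mul_norm_pow_le (by fun_prop) (by fun_prop) (by norm_num)
          (by norm_num) (by norm_num)
    _ = _ := by
        rw [Measure.volume_eq_prod, lintegral_prod _ hA.aemeasurable,
          lintegral_prod_symm _ hB.aemeasurable, lintegral_prod_symm _ hC.aemeasurable]
        ring

/-- Gagliardo's inequality in `ℝ³`, with the partial derivatives `d i` of `v` kept apart. -/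
theorem lintegral_enorm_rpow_three_halves_le {v : ℝ × ℝ × ℝ → ℝ} {d : Fin 3 → ℝ × ℝ × ℝ → ℝ}
    (hd : ∀ i, Measurable (d i))
    (hd₀ : ∀ p, HasDerivAt (fun s => v (s, p.2)) (d 0 p) p.1)
    (hd₁ : ∀ p, HasDerivAt (fun s => v (p.1, s, p.2.2)) (d 1 p) p.2.1)
    (hd₂ : ∀ p, HasDerivAt (fun s => v (p.1, p.2.1, s)) (d 2 p) p.2.2)
    (hv : Tendsto v (cocompact _) (𝓝 0)) :
    ∫⁻ p, ‖v p‖ₑ ^ (3/2 : ℝ) ≤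
      (∫⁻ p, ‖d 0 p‖ₑ) ^ (1/2 : ℝ) * (∫⁻ p, ‖d 1 p‖ₑ) ^ (1/2 : ℝ) *
        (∫⁻ p, ‖d 2 p‖ₑ) ^ (1/2 : ℝ) := by
  have hd' : ∀ i, Measurable fun p => ‖d i p‖ₑ := fun i => (hd i).enorm
  have line₀ : ∀ p : ℝ × ℝ × ℝ, ‖v p‖ₑ ≤ ∫⁻ t, ‖d 0 (t, p.2)‖ₑ := fun p =>
    enorm_le_lintegral_enorm_of_hasDerivAt (fun t => hd₀ (t, p.2))
      (hv.comp (tendsto_cocompact_of_abs_le_norm fun s => norm_fst_le (s, p.2))) p.1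
  have line₁ : ∀ p : ℝ × ℝ × ℝ, ‖v p‖ₑ ≤ ∫⁻ t, ‖d 1 (p.1, t, p.2.2)‖ₑ := fun p =>
    enorm_le_lintegral_enorm_of_hasDerivAt (fun t => hd₁ (p.1, t, p.2.2))
      (hv.comp (tendsto_cocompact_of_abs_le_norm fun s =>
        (norm_fst_le (s, p.2.2)).trans (norm_snd_le (p.1, s, p.2.2)))) p.2.1
  have line₂ : ∀ p : ℝ × ℝ × ℝ, ‖v p‖ₑ ≤ ∫⁻ t, ‖d 2 (p.1, p.2.1, t)‖ₑ := fun p =>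
    enorm_le_lintegral_enorm_of_hasDerivAt (fun t => hd₂ (p.1, p.2.1, t))
      (hv.comp (tendsto_cocompact_of_abs_le_norm fun s =>
        (norm_snd_le (p.2.1, s)).trans (norm_snd_le (p.1, p.2.1, s)))) p.2.2
  have cube : ∀ a : ℝ≥0∞, a ^ (3/2 : ℝ) = a ^ (1/2 : ℝ) * a ^ (1/2 : ℝ) * a ^ (1/2 : ℝ) := by
    intro a
    rw [← ENNReal.rpow_add_of_nonneg _ _ (by norm_num) (by norm_num),
      ← ENNReal.rpow_add_of_nonneg _ _ (by norm_num) (by norm_num)]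
    norm_num
  have hB : Measurable fun q : ℝ × ℝ => ∫⁻ t, ‖d 1 (q.1, t, q.2)‖ₑ :=
    (show Measurable fun z : (ℝ × ℝ) × ℝ => ‖d 1 (z.1.1, z.2, z.1.2)‖ₑ by
      fun_prop).lintegral_prod_right'
  have hC : Measurable fun q : ℝ × ℝ => ∫⁻ t, ‖d 2 (q.1, q.2, t)‖ₑ :=
    (show Measurable fun z : (ℝ × ℝ) × ℝ => ‖d 2 (z.1.1, z.1.2, z.2)‖ₑ by
      fun_prop).lintegral_prod_right'
  calc ∫⁻ p, ‖v p‖ₑ ^ (3/2 : ℝ)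
      ≤ ∫⁻ p : ℝ × ℝ × ℝ, (∫⁻ t, ‖d 0 (t, p.2)‖ₑ) ^ (1/2 : ℝ) *
          (∫⁻ t, ‖d 1 (p.1, t, p.2.2)‖ₑ) ^ (1/2 : ℝ) *
          (∫⁻ t, ‖d 2 (p.1, p.2.1, t)‖ₑ) ^ (1/2 : ℝ) := by
        gcongr with p
        rw [cube]
        gcongr
        exacts [line₀ p, line₁ p, line₂ p]
    _ ≤ _ := (lintegral_sqrt_mul_sqrt_mul_sqrt_le (hd' 0).lintegral_prod_left' hB hC).trans_eq
        (by rw [lintegral_eq_lintegral_lintegral_fst (hd' 0),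
          lintegral_eq_lintegral_lintegral_snd (hd' 1),
          lintegral_eq_lintegral_lintegral_thd (hd' 2)])

def coords3 (p : ℝ × ℝ × ℝ) : ℝ³ := !₂[p.1, p.2.1, p.2.2]

theorem coords3_eq_comp : coords3 = MeasurableEquiv.toLp 2 (Fin 3 → ℝ) ∘
    (MeasurableEquiv.piFinSuccAbove (fun _ : Fin 3 => ℝ) 0).symm ∘
    Prod.map id (MeasurableEquiv.finTwoArrow (α := ℝ)).symm := by
  funext p
  ext j
  fin_cases j <;> rfl

theorem measurePreserving_coords3 : MeasurePreserving coords3 := by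
  rw [coords3_eq_comp]
  exact ((EuclideanSpace.volume_preserving_symm_measurableEquiv_toLp (Fin 3)).symm _).comp
    (((volume_preserving_piFinSuccAbove (fun _ : Fin 3 => ℝ) 0).symm _).comp
      ((MeasurePreserving.id volume).prod ((volume_preserving_finTwoArrow ℝ).symm _)))

theorem continuous_coords3 : Continuous coords3 := by
  unfold coords3
  fun_prop

theorem norm_le_norm_coords3 (p : ℝ × ℝ × ℝ) : ‖p‖ ≤ ‖coords3 p‖ := by
  simp only [Prod.norm_def]
  exact max_le (PiLp.norm_apply_le (coords3 p) 0)
    (max_le (PiLp.norm_apply_le (coords3 p) 1) (PiLp.norm_apply_le (coords3 p) 2))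

theorem tendsto_coords3_cocompact : Tendsto coords3 (cocompact _) (cocompact _) := by
  rw [← Metric.cobounded_eq_cocompact, ← Metric.cobounded_eq_cocompact,
    ← tendsto_norm_atTop_iff_cobounded]
  exact tendsto_atTop_mono norm_le_norm_coords3 tendsto_norm_cobounded_atTop

section Sobolev

variable {f : ℝ³ → ℝ}

theorem hasDerivAt_comp_coords3_fst (hf : Differentiable ℝ f) (p : ℝ × ℝ × ℝ) :
    HasDerivAt (fun s => f (coords3 (s, p.2))) (pd 0 f (coords3 p)) p.1 := by
  have hline : (fun s => f (coords3 (s, p.2))) =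
      fun s => f (coords3 p + (s - p.1) • EuclideanSpace.single 0 1) := by
    funext s; congr 1; ext j; fin_cases j <;> simp [coords3]
  rw [hline]
  exact hasDerivAt_comp_add_sub_smul (hf _) _ _

theorem hasDerivAt_comp_coords3_snd (hf : Differentiable ℝ f) (p : ℝ × ℝ × ℝ) :
    HasDerivAt (fun s => f (coords3 (p.1, s, p.2.2))) (pd 1 f (coords3 p)) p.2.1 := by
  have hline : (fun s => f (coords3 (p.1, s, p.2.2))) =
      fun s => f (coords3 p + (s - p.2.1) • EuclideanSpace.single 1 1) := by
    funext s; congr 1; ext j; fin_cases j <;> simp [coords3]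
  rw [hline]
  exact hasDerivAt_comp_add_sub_smul (hf _) _ _

theorem hasDerivAt_comp_coords3_thd (hf : Differentiable ℝ f) (p : ℝ × ℝ × ℝ) :
    HasDerivAt (fun s => f (coords3 (p.1, p.2.1, s))) (pd 2 f (coords3 p)) p.2.2 := by
  have hline : (fun s => f (coords3 (p.1, p.2.1, s))) =
      fun s => f (coords3 p + (s - p.2.2) • EuclideanSpace.single 2 1) := by
    funext s; congr 1; ext j; fin_cases j <;> simp [coords3]
  rw [hline]
  exact hasDerivAt_comp_add_sub_smul (hf _) _ _

theorem lintegral_enorm_pow_six_le (hf : Differentiable ℝ f)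
    (hf0 : Tendsto f (cocompact _) (𝓝 0)) (hf6 : ∫⁻ x, ‖f x‖ₑ ^ 6 ≠ ∞) :
    ∫⁻ x, ‖f x‖ₑ ^ 6 ≤ 4096 *
      ((∫⁻ x, ‖pd 0 f x‖ₑ ^ 2) * (∫⁻ x, ‖pd 1 f x‖ₑ ^ 2) * (∫⁻ x, ‖pd 2 f x‖ₑ ^ 2)) := by
  set X := ∫⁻ x, ‖f x‖ₑ ^ 6
  set I : Fin 3 → ℝ≥0∞ := fun i => ∫⁻ x, ‖pd i f x‖ₑ ^ 2
  set d : Fin 3 → ℝ × ℝ × ℝ → ℝ := fun i p => 4 * f (coords3 p) ^ 3 * pd i f (coords3 p)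
  have hcont := hf.continuous
  have hpd : ∀ i, Measurable (pd i f) := fun i => measurable_fderiv_apply_const ℝ f _
  have hv := lintegral_enorm_rpow_three_halves_le (v := fun p => f (coords3 p) ^ 4) (d := d)
    (fun i => by have := continuous_coords3; fun_prop)
    (fun p => by simpa using (hasDerivAt_comp_coords3_fst hf p).fun_pow 4)
    (fun p => by simpa using (hasDerivAt_comp_coords3_snd hf p).fun_pow 4)
    (fun p => by simpa using (hasDerivAt_comp_coords3_thd hf p).fun_pow 4)
    (by simpa using (hf0.comp tendsto_coords3_cocompact).pow 4)
  have hX : ∫⁻ p, ‖f (coords3 p) ^ 4‖ₑ ^ (3/2 : ℝ) = X := by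
    refine .trans (lintegral_congr fun p => ?_)
      (measurePreserving_coords3.lintegral_comp (f := fun x => ‖f x‖ₑ ^ 6) (by fun_prop))
    rw [enorm_pow, ← ENNReal.rpow_natCast_mul, ← ENNReal.rpow_natCast]
    norm_num
  have hd : ∀ i, (∫⁻ p, ‖d i p‖ₑ) ^ 2 ≤ 16 * (X * I i) := by
    intro i
    rw [measurePreserving_coords3.lintegral_comp (f := fun x => ‖4 * f x ^ 3 * pd i f x‖ₑ)
      (by fun_prop)]
    simp only [enorm_mul, enorm_pow, show ‖(4 : ℝ)‖ₑ = 4 from Real.enorm_natCast 4, mul_assoc]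
    rw [lintegral_const_mul' _ _ (by simp), mul_pow]
    gcongr
    · norm_num
    · exact lintegral_pow_three_mul_sq_le (by fun_prop) (by fun_prop)
  have h4 : X ^ 3 * X ≤ X ^ 3 * (4096 * (I 0 * I 1 * I 2)) :=
    calc X ^ 3 * X = (X ^ 2) ^ 2 := by ring
      _ ≤ ((∫⁻ p, ‖d 0 p‖ₑ) * (∫⁻ p, ‖d 1 p‖ₑ) * (∫⁻ p, ‖d 2 p‖ₑ)) ^ 2 := by
        gcongr
        simpa only [hX, mul_pow, ENNReal.rpow_half_sq] using pow_le_pow_left₀ zero_le hv 2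
      _ = (∫⁻ p, ‖d 0 p‖ₑ) ^ 2 * (∫⁻ p, ‖d 1 p‖ₑ) ^ 2 * (∫⁻ p, ‖d 2 p‖ₑ) ^ 2 := by ring
      _ ≤ 16 * (X * I 0) * (16 * (X * I 1)) * (16 * (X * I 2)) := by gcongr <;> apply hd
      _ = X ^ 3 * (4096 * (I 0 * I 1 * I 2)) := by ring
  rcases eq_or_ne X 0 with hX0 | hX0
  · rw [hX0]
    exact zero_le
  exact (ENNReal.mul_le_mul_iff_right (pow_ne_zero 3 hX0) (ENNReal.pow_ne_top hf6)).1 h4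

theorem lintegral_enorm_pow_three_le (hf : Differentiable ℝ f)
    (hf0 : Tendsto f (cocompact _) (𝓝 0)) (hf6 : ∫⁻ x, ‖f x‖ₑ ^ 6 ≠ ∞) :
    ∫⁻ x, ‖f x‖ₑ ^ 3 ≤ 8 * (∫⁻ x, ‖f x‖ₑ ^ 2) ^ (3/4 : ℝ) *
      ((∫⁻ x, ‖pd 0 f x‖ₑ ^ 2) * (∫⁻ x, ‖pd 1 f x‖ₑ ^ 2) * (∫⁻ x, ‖pd 2 f x‖ₑ ^ 2)) ^ (1/4 : ℝ) :=
  calc ∫⁻ x, ‖f x‖ₑ ^ 3 ≤ (∫⁻ x, ‖f x‖ₑ ^ 2) ^ (3/4 : ℝ) * (∫⁻ x, ‖f x‖ₑ ^ 6) ^ (1/4 : ℝ) :=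
        lintegral_pow_three_le hf.continuous.enorm.aemeasurable
    _ ≤ (∫⁻ x, ‖f x‖ₑ ^ 2) ^ (3/4 : ℝ) * (4096 * ((∫⁻ x, ‖pd 0 f x‖ₑ ^ 2) *
          (∫⁻ x, ‖pd 1 f x‖ₑ ^ 2) * (∫⁻ x, ‖pd 2 f x‖ₑ ^ 2))) ^ (1/4 : ℝ) := by
        gcongr
        exact lintegral_enorm_pow_six_le hf hf0 hf6
    _ = _ := by
        rw [ENNReal.mul_rpow_of_nonneg _ _ (by norm_num), show (4096 : ℝ≥0∞) = 8 ^ 4 by norm_num,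
          ← ENNReal.rpow_natCast_mul]
        norm_num
        ring

theorem pd_comm (hf : ContDiff ℝ 2 f) (i j : Fin 3) : pd i (pd j f) = pd j (pd i f) := by
  funext x
  have hsym : IsSymmSndFDerivAt ℝ f x :=
    hf.contDiffAt.isSymmSndFDerivAt (by simp [minSmoothness_of_isRCLikeNormedField])
  have hD : Differentiable ℝ (fderiv ℝ f) :=
    (hf.fderiv_right (m := 1) (by norm_num)).differentiable one_ne_zero
  have hpd : ∀ a b : Fin 3, pd a (pd b f) x =
      fderiv ℝ (fderiv ℝ f) x (EuclideanSpace.single a 1) (EuclideanSpace.single b 1) := by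
    intro a b
    change fderiv ℝ (fun y => fderiv ℝ f y (EuclideanSpace.single b 1)) x _ = _
    rw [fderiv_clm_apply (hD x) (differentiableAt_const _)]
    simp
  rw [hpd, hpd, hsym.eq]

end Sobolev

noncomputable def schwartzPd (i : Fin 3) (g : 𝓢(ℝ³, ℝ)) : 𝓢(ℝ³, ℝ) :=
  LineDeriv.lineDerivOp (EuclideanSpace.single i (1 : ℝ)) g

theorem coe_schwartzPd (i : Fin 3) (g : 𝓢(ℝ³, ℝ)) : ⇑(schwartzPd i g) = pd i g :=
  rfl

theorem SchwartzMap.lintegral_enorm_pow_three_le (g : 𝓢(ℝ³, ℝ)) :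
    ∫⁻ x, ‖g x‖ₑ ^ 3 ≤ 8 * (∫⁻ x, ‖g x‖ₑ ^ 2) ^ (3/4 : ℝ) *
      ((∫⁻ x, ‖pd 0 g x‖ₑ ^ 2) * (∫⁻ x, ‖pd 1 g x‖ₑ ^ 2) * (∫⁻ x, ‖pd 2 g x‖ₑ ^ 2)) ^ (1/4 : ℝ) :=
  _root_.lintegral_enorm_pow_three_le g.differentiable g.toZeroAtInfty.zero_at_infty'
    (g.lintegral_enorm_pow_ne_top (by norm_num))

section Family

variable {ι : Type*} [Fintype ι] (g : ι → 𝓢(ℝ³, ℝ))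

theorem lintegral_enorm_pow_three_le_sum_lintegral (p : ι) :
    ∫⁻ x, ‖g p x‖ₑ ^ 3 ≤ 8 * ((∑ p, ∫⁻ x, ‖g p x‖ₑ ^ 2) ^ (3/4 : ℝ) *
      ((∑ q : ι × Fin 3, ∫⁻ x, ‖pd q.2 (g q.1) x‖ₑ ^ 2) ^ (1/2 : ℝ) *
        (∑ p, ∫⁻ x, ‖pd 2 (g p) x‖ₑ ^ 2) ^ (1/4 : ℝ))) := by
  set B := ∑ q : ι × Fin 3, ∫⁻ x, ‖pd q.2 (g q.1) x‖ₑ ^ 2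
  have hB : ∀ k, ∫⁻ x, ‖pd k (g p) x‖ₑ ^ 2 ≤ B := fun k =>
    Finset.single_le_sum (f := fun q : ι × Fin 3 => ∫⁻ x, ‖pd q.2 (g q.1) x‖ₑ ^ 2)
      (fun _ _ => zero_le) (Finset.mem_univ (p, k))
  have hBBD : ∀ D, (B * B * D) ^ (1/4 : ℝ) = B ^ (1/2 : ℝ) * D ^ (1/4 : ℝ) := fun D => by
    rw [← sq, ENNReal.mul_rpow_of_nonneg _ _ (by norm_num), ← ENNReal.rpow_natCast_mul]
    norm_num
  refine (g p).lintegral_enorm_pow_three_le.trans ?_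
  rw [mul_assoc, ← hBBD]
  gcongr
  · exact Finset.single_le_sum (f := fun p => ∫⁻ x, ‖g p x‖ₑ ^ 2) (fun _ _ => zero_le)
      (Finset.mem_univ p)
  · exact hB 0
  · exact hB 1
  · exact Finset.single_le_sum (f := fun p => ∫⁻ x, ‖pd 2 (g p) x‖ₑ ^ 2) (fun _ _ => zero_le)
      (Finset.mem_univ p)

theorem lintegral_sum_enorm_sq_rpow_le :
    ∫⁻ x, (∑ p, ‖g p x‖ₑ ^ 2) ^ (3/2 : ℝ) ≤
      8 * (Fintype.card ι : ℝ≥0∞) ^ (3/2 : ℝ) * (∑ p, ∫⁻ x, ‖g p x‖ₑ ^ 2) ^ (3/4 : ℝ) *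
        (∑ q : ι × Fin 3, ∫⁻ x, ‖pd q.2 (g q.1) x‖ₑ ^ 2) ^ (1/2 : ℝ) *
        (∑ p, ∫⁻ x, ‖pd 2 (g p) x‖ₑ ^ 2) ^ (1/4 : ℝ) := by
  set K := (∑ p, ∫⁻ x, ‖g p x‖ₑ ^ 2) ^ (3/4 : ℝ) *
    ((∑ q : ι × Fin 3, ∫⁻ x, ‖pd q.2 (g q.1) x‖ₑ ^ 2) ^ (1/2 : ℝ) *
      (∑ p, ∫⁻ x, ‖pd 2 (g p) x‖ₑ ^ 2) ^ (1/4 : ℝ))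
  calc ∫⁻ x, (∑ p, ‖g p x‖ₑ ^ 2) ^ (3/2 : ℝ)
      ≤ ∫⁻ x, (Fintype.card ι : ℝ≥0∞) ^ (1/2 : ℝ) * ∑ p, ‖g p x‖ₑ ^ 3 :=
        lintegral_mono fun x => ENNReal.sum_sq_rpow_three_halves_le _
    _ = (Fintype.card ι : ℝ≥0∞) ^ (1/2 : ℝ) * ∑ p, ∫⁻ x, ‖g p x‖ₑ ^ 3 := by
        rw [lintegral_const_mul' _ _ (by simp), lintegral_finsetSum _ fun p _ => by fun_prop]
    _ ≤ (Fintype.card ι : ℝ≥0∞) ^ (1/2 : ℝ) * ∑ p : ι, 8 * K := by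
        gcongr with p
        exact lintegral_enorm_pow_three_le_sum_lintegral g p
    _ = _ := by
        rw [Finset.sum_const, Finset.card_univ, nsmul_eq_mul, show (3/2 : ℝ) = 1/2 + 1 by norm_num,
          ENNReal.rpow_add_of_nonneg _ _ (by norm_num) (by norm_num), ENNReal.rpow_one]
        ring

theorem integral_sum_sq_rpow_le :
    ∫ x, (∑ p, g p x ^ 2) ^ (3/2 : ℝ) ≤
      8 * (Fintype.card ι : ℝ) ^ (3/2 : ℝ) * (∫ x, ∑ p, g p x ^ 2) ^ (3/4 : ℝ) *
        (∫ x, ∑ q : ι × Fin 3, pd q.2 (g q.1) x ^ 2) ^ (1/2 : ℝ) *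
        (∫ x, ∑ p, pd 2 (g p) x ^ 2) ^ (1/4 : ℝ) := by
  have hpd : ∀ k p, AEStronglyMeasurable (pd k (g p)) :=
    fun k p => (schwartzPd k (g p)).continuous.aestronglyMeasurable
  have hfin : ∀ k p, ∫⁻ x, ‖pd k (g p) x‖ₑ ^ 2 ≠ ∞ :=
    fun k p => (schwartzPd k (g p)).lintegral_enorm_pow_ne_top two_ne_zero
  have hA : ∑ p, ∫⁻ x, ‖g p x‖ₑ ^ 2 ≠ ∞ :=
    ENNReal.sum_ne_top.2 fun p _ => (g p).lintegral_enorm_pow_ne_top two_ne_zero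
  have hB : ∑ q : ι × Fin 3, ∫⁻ x, ‖pd q.2 (g q.1) x‖ₑ ^ 2 ≠ ∞ :=
    ENNReal.sum_ne_top.2 fun q _ => hfin q.2 q.1
  have hD : ∑ p, ∫⁻ x, ‖pd 2 (g p) x‖ₑ ^ 2 ≠ ∞ := ENNReal.sum_ne_top.2 fun p _ => hfin 2 p
  rw [integral_sum_sq_rpow (fun p => (g p).continuous.aestronglyMeasurable) (by norm_num),
    integral_sum_sq (fun p => (g p).continuous.aestronglyMeasurable),
    integral_sum_sq (φ := fun q : ι × Fin 3 => pd q.2 (g q.1)) (fun q => hpd q.2 q.1),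
    integral_sum_sq (φ := fun p : ι => pd 2 (g p)) (fun p => hpd 2 p)]
  refine (ENNReal.toReal_mono (by finiteness) (lintegral_sum_enorm_sq_rpow_le g)).trans_eq ?_
  simp only [ENNReal.toReal_mul, ← ENNReal.toReal_rpow, ENNReal.toReal_natCast,
    ENNReal.toReal_ofNat]

end Family

/-- `‖∇u‖_{L³}³ ≤ C ‖∇u‖_{L²}^{3/2} ‖∇²u‖_{L²} ‖∇∂₃u‖_{L²}^{1/2}` for Schwartz fields. -/
theorem stmt_19 :
    ∃ C : ℝ, 0 < C ∧ ∀ u : Fin 3 → SchwartzMap (EuclideanSpace ℝ (Fin 3)) ℝ,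
      (∫ x, (∑ i : Fin 3, ∑ j : Fin 3, (pd j (u i) x) ^ 2) ^ ((3:ℝ)/2)) ≤
        C * (∫ x, ∑ i : Fin 3, ∑ j : Fin 3, (pd j (u i) x) ^ 2) ^ ((3:ℝ)/4) *
            (∫ x, ∑ i : Fin 3, ∑ j : Fin 3, ∑ k : Fin 3, (pd k (pd j (u i)) x) ^ 2) ^ ((1:ℝ)/2) *
            (∫ x, ∑ i : Fin 3, ∑ j : Fin 3, (pd j (pd 2 (u i)) x) ^ 2) ^ ((1:ℝ)/4) := by
  refine ⟨8 * (Fintype.card (Fin 3 × Fin 3) : ℝ) ^ (3/2 : ℝ), by positivity, fun u => ?_⟩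
  let g : Fin 3 × Fin 3 → 𝓢(ℝ³, ℝ) := fun p => schwartzPd p.2 (u p.1)
  have hA : ∀ x, ∑ i, ∑ j, pd j (u i) x ^ 2 = ∑ p, g p x ^ 2 := fun x => by
    simp only [Fintype.sum_prod_type, g, coe_schwartzPd]
  have hB : ∀ x, ∑ i, ∑ j, ∑ k, pd k (pd j (u i)) x ^ 2 =
      ∑ q : (Fin 3 × Fin 3) × Fin 3, pd q.2 (g q.1) x ^ 2 := fun x => by
    simp only [Fintype.sum_prod_type]
    rfl
  have hD : ∀ x, ∑ i, ∑ j, pd j (pd 2 (u i)) x ^ 2 = ∑ p, pd 2 (g p) x ^ 2 := fun x => by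
    simp only [Fintype.sum_prod_type, g, coe_schwartzPd, pd_comm ((u _).smooth 2)]
  simp only [hA, hB, hD]
  exact integral_sum_sq_rpow_le g
end
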